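/- arXiv:2308.12576 — 3 statements merged into one kernel-verified Lean document; each statement's English description precedes it below -/
import Mathlib

section
/- Theorem 1: Every strongly consistently connected system of random variables satisfies counterfactual definiteness; that is, for every choice of factual context c0, the factual–counterfactual subsystem with respect to c0 is noncontextual. -/
open Finset

/-- A probability distribution on a finite type, given by a real-valued mass function:
nonnegative and summing to one. -/
def IsDist {α : Type} [Fintype α] (d : α → ℝ) : Prop :=
  (∀ a, 0 ≤ d a) ∧ ∑ a, d a = 1

/-- The pushforward (marginal) of a mass function along a map. -/
def margin {α β : Type} [Fintype α] [DecidableEq β] (d : α → ℝ) (f : α → β) : β → ℝ :=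
  fun b => ∑ a ∈ univ.filter (fun a => f a = b), d a

open Function

section Margin

variable {α α' β γ : Type} [Fintype α] [Fintype α'] [DecidableEq β] [DecidableEq γ]

theorem margin_comp_apply_of_injective (d : α → ℝ) (f : α → β) {g : β → γ}
    (hg : Injective g) (b : β) : margin d (g ∘ f) (g b) = margin d f b := by
  simp only [margin, comp_apply, hg.eq_iff]

theorem margin_eq_of_margin_comp_eq {d : α → ℝ} {d' : α' → ℝ} {f : α → β} {f' : α' → β}
    {g : β → γ} (hg : Injective g) (h : margin d (g ∘ f) = margin d' (g ∘ f')) :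
    margin d f = margin d' f' := by
  funext b
  rw [← margin_comp_apply_of_injective d f hg, ← margin_comp_apply_of_injective d' f' hg, h]

end Margin

theorem injective_pi_subtype_reindex {ι : Type} {P R : ι → Prop} (V : ι → Type)
    (h : ∀ i, P i ↔ R i) :
    Injective fun (y : ∀ i : {i // P i}, V i) (i : {i // R i}) => y ⟨i, (h i).2 i.2⟩ :=
  fun _ _ hyy => funext fun i => congrFun hyy ⟨i, (h i).1 i.2⟩

theorem scc_system_satisfies_CFD_general
    {Q C : Type} [Fintype Q] [DecidableEq Q]
    (mea : Q → C → Bool) (V : Q → Type) [∀ q, Fintype (V q)] [∀ q, DecidableEq (V q)]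
    (μ : ∀ c : C, (∀ q : {q : Q // mea q c}, V q.1) → ℝ)
    (hdist : ∀ c, IsDist (μ c))
    (hscc : ∀ (Q' : Finset Q) (c c' : C)
        (h : ∀ q ∈ Q', mea q c) (h' : ∀ q ∈ Q', mea q c'),
        margin (μ c) (fun x (q : {q : Q // q ∈ Q'}) => x ⟨q.1, h q.1 q.2⟩)
          = margin (μ c') (fun x (q : {q : Q // q ∈ Q'}) => x ⟨q.1, h' q.1 q.2⟩)) :
    ∀ c0 : C, ∃ S : (∀ q : {q : Q // mea q c0}, V q.1) → ℝ,
      IsDist S ∧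
      ∀ c : C,
        margin S (fun x (q : {q : Q // mea q c0 ∧ mea q c}) => x ⟨q.1, q.2.1⟩)
          = margin (μ c) (fun x (q : {q : Q // mea q c0 ∧ mea q c}) => x ⟨q.1, q.2.2⟩) := by
  -- The factual distribution itself is the coupling: s.c.c. makes its marginals agree with those
  -- of every other context on the jointly measured contents.
  intro c0
  refine ⟨μ c0, hdist c0, fun c => ?_⟩
  let Q' : Finset Q := univ.filter fun q => mea q c0 ∧ mea q c
  have hQ' : ∀ q, q ∈ Q' ↔ mea q c0 ∧ mea q c := by simp [Q']
  exact margin_eq_of_margin_comp_eq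
    (injective_pi_subtype_reindex (fun q => V q) fun q => (hQ' q).symm)
    (hscc Q' c0 c (fun q hq => ((hQ' q).1 hq).1) (fun q hq => ((hQ' q).1 hq).2))

/-- **Theorem 1.** Any strongly consistently connected system of random variables, given by
contents `Q`, contexts `C`, a measurement relation `mea` and, for each context `c`,
a joint distribution `μ c` on the product of the value sets of the contents measured in `c`,
satisfies counterfactual definiteness: for every choice of a factual context `c0`, the
factual–counterfactual subsystem with respect to `c0` (contents `{q // mea q c0}`, and in
each context `c` the marginal of `μ c` on the contents measured both in `c` and in `c0`)
is noncontextual, i.e., admits a reduced coupling `S`. -/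
theorem scc_system_satisfies_CFD
    {Q C : Type} [Fintype Q] [DecidableEq Q] [Fintype C]
    (mea : Q → C → Bool) (V : Q → Type) [∀ q, Fintype (V q)] [∀ q, DecidableEq (V q)]
    (μ : ∀ c : C, (∀ q : {q : Q // mea q c}, V q.1) → ℝ)
    (hdist : ∀ c, IsDist (μ c))
    (hscc : ∀ (Q' : Finset Q) (c c' : C)
        (h : ∀ q ∈ Q', mea q c) (h' : ∀ q ∈ Q', mea q c'),
        margin (μ c) (fun x (q : {q : Q // q ∈ Q'}) => x ⟨q.1, h q.1 q.2⟩)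
          = margin (μ c') (fun x (q : {q : Q // q ∈ Q'}) => x ⟨q.1, h' q.1 q.2⟩)) :
    ∀ c0 : C, ∃ S : (∀ q : {q : Q // mea q c0}, V q.1) → ℝ,
      IsDist S ∧
      ∀ c : C,
        margin S (fun x (q : {q : Q // mea q c0 ∧ mea q c}) => x ⟨q.1, q.2.1⟩)
          = margin (μ c) (fun x (q : {q : Q // mea q c0 ∧ mea q c}) => x ⟨q.1, q.2.2⟩) :=
  scc_system_satisfies_CFD_general mea V μ hdist hscc
end

section
/- Every factual–counterfactual subsystem of the Specker magic-box system is noncontextual: for each choice of factual context c0 ∈ {1,2,3}, there exists a probability measure S on {−1,+1}^2 (indexed by the two contents measured in c0) assigning probability 1/2 to each of (+1,−1) and (−1,+1), such that for every context c, the marginal of S on the contents measured both in c and in c0 equals the corresponding marginal of context c's distribution. Hence the Specker system satisfies counterfactual definiteness despite being contextual. -/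
open Finset

/-- The two-element value set `{-1, +1}`. -/
abbrev Sign : Type := ({-1, 1} : Finset ℤ)

/-- Measurement relation of the Specker magic-box system: context `c` measures exactly
the two contents `c` and `c + 1` (so the three contexts measure the content pairs
`{1,2}`, `{2,3}`, `{3,1}`). -/
def speckerMea (q c : Fin 3) : Bool := q == c || q == c + 1

lemma speckerMea_self : ∀ c : Fin 3, speckerMea c c := by decide

lemma speckerMea_succ : ∀ c : Fin 3, speckerMea (c + 1) c := by decide

/-- The distribution in context `c` of the Specker magic-box system: the two measured
variables are `±1`-valued, perfectly anticorrelated, and uniform — probability `1/2` for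
each of the outcomes `(+1, -1)` and `(-1, +1)`, and `0` for `(+1, +1)` and `(-1, -1)`. -/
noncomputable def speckerμ (c : Fin 3)
    (x : ∀ q : {q : Fin 3 // speckerMea q c}, Sign) : ℝ :=
  if (x ⟨c, speckerMea_self c⟩ : ℤ) = -(x ⟨c + 1, speckerMea_succ c⟩ : ℤ) then 1 / 2 else 0

theorem margin_ite_const {α β : Type} [Fintype α] [DecidableEq β] (P : α → Prop)
    [DecidablePred P] (r : ℝ) (f : α → β) (b : β) :
    margin (fun a => if P a then r else 0) f b = #{a | f a = b ∧ P a} * r := by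
  rw [margin, ← sum_filter, filter_filter, sum_const, nsmul_eq_mul]

def IsAnticorrelated (c : Fin 3) (x : {q : Fin 3 // speckerMea q c} → Sign) : Prop :=
  (x ⟨c, speckerMea_self c⟩ : ℤ) = -(x ⟨c + 1, speckerMea_succ c⟩ : ℤ)

instance (c : Fin 3) : DecidablePred (IsAnticorrelated c) :=
  fun x => inferInstanceAs (Decidable (_ = _))

theorem speckerμ_eq_ite (c : Fin 3) :
    speckerμ c = fun x => if IsAnticorrelated c x then 1 / 2 else 0 :=
  rfl

theorem card_isAnticorrelated (c : Fin 3) :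
    #{x | IsAnticorrelated c x} = 2 := by
  fin_cases c <;> decide

theorem isDist_speckerμ (c : Fin 3) : IsDist (speckerμ c) := by
  rw [speckerμ_eq_ite]
  refine ⟨fun x => by dsimp only; split_ifs <;> norm_num, ?_⟩
  rw [sum_ite, sum_const_zero, add_zero, sum_const, nsmul_eq_mul, card_isAnticorrelated]
  norm_num

/-- Two distinct contexts share exactly one content, and each value of one variable has
exactly one anticorrelated extension, so for `c ≠ c0` both counts are `1`. -/
theorem card_anticorrelated_extensions (c0 c : Fin 3)
    (b : {q : Fin 3 // speckerMea q c0 ∧ speckerMea q c} → Sign) :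
    #{x | (fun q => x ⟨q.1, q.2.1⟩) = b ∧ IsAnticorrelated c0 x}
      = #{x | (fun q => x ⟨q.1, q.2.2⟩) = b ∧ IsAnticorrelated c x} := by
  rcases eq_or_ne c c0 with rfl | hne
  · rfl
  · revert b hne
    fin_cases c0 <;> fin_cases c <;> decide

/-- Every factual–counterfactual subsystem of the Specker magic-box system is
noncontextual: for each factual context `c0` there is a probability measure `S` on
`{-1,+1}²` (indexed by the two contents measured in `c0`) assigning probability `1/2` to
each of `(+1, -1)` and `(-1, +1)`, whose marginal on the contents measured both in a
context `c` and in `c0` equals the corresponding marginal of `speckerμ c`, for every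
context `c`. Hence the Specker system satisfies counterfactual definiteness despite
being contextual. -/
theorem specker_FCF_subsystems_noncontextual :
    ∀ c0 : Fin 3, ∃ S : (∀ q : {q : Fin 3 // speckerMea q c0}, Sign) → ℝ,
      IsDist S ∧
      (∀ x, S x =
        if (x ⟨c0, speckerMea_self c0⟩ : ℤ) = -(x ⟨c0 + 1, speckerMea_succ c0⟩ : ℤ)
        then 1 / 2 else 0) ∧
      ∀ c : Fin 3,
        margin S (fun x (q : {q : Fin 3 // speckerMea q c0 ∧ speckerMea q c}) =>
            x ⟨q.1, q.2.1⟩)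
          = margin (speckerμ c)
              (fun x (q : {q : Fin 3 // speckerMea q c0 ∧ speckerMea q c}) =>
                x ⟨q.1, q.2.2⟩) := by
  intro c0
  refine ⟨speckerμ c0, isDist_speckerμ c0, fun x => rfl, fun c => funext fun b => ?_⟩
  rw [speckerμ_eq_ite, speckerμ_eq_ite, margin_ite_const, margin_ite_const,
    card_anticorrelated_extensions c0 c b]
end

section
/- Claim (A) of Section 3.2: If a system of random variables (not necessarily strongly consistently connected) is CbD-noncontextual, i.e., admits a multimaximally connected coupling, then every factual–counterfactual subsystem of it also admits a multimaximally connected coupling; that is, every CbD-noncontextual system satisfies generalized counterfactual definiteness (gCFD). -/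
open Finset

/-- `γ` is a coupling of the system `(μ c)_{c ∈ C}`: a probability measure on the product
over all pairs `(q, c)` with `q ≺ c` of `V q`, whose marginal on the coordinates of each
context `c` equals `μ c`. -/
def IsCoupling {Q C : Type} [Fintype Q] [DecidableEq Q] [Fintype C] [DecidableEq C]
    (mea : Q → C → Bool) (V : Q → Type) [∀ q, Fintype (V q)] [∀ q, DecidableEq (V q)]
    (μ : ∀ c : C, (∀ q : {q : Q // mea q c}, V q.1) → ℝ)
    (γ : (∀ p : {p : Q × C // mea p.1 p.2}, V p.1.1) → ℝ) : Prop :=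
  IsDist γ ∧
  ∀ c : C, margin γ (fun x (q : {q : Q // mea q c}) => x ⟨(q.1, c), q.2⟩) = μ c

/-- `γ` is multimaximally connected: for every content `q` and contexts `c, c'` in which
`q` is measured, the `γ`-probability that the `(q, c)`-coordinate equals the
`(q, c')`-coordinate is the greatest diagonal probability over all couplings of the
`q`-marginal of `μ c` with the `q`-marginal of `μ c'`. -/
def IsMultimaximal {Q C : Type} [Fintype Q] [DecidableEq Q] [Fintype C] [DecidableEq C]
    (mea : Q → C → Bool) (V : Q → Type) [∀ q, Fintype (V q)] [∀ q, DecidableEq (V q)]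
    (μ : ∀ c : C, (∀ q : {q : Q // mea q c}, V q.1) → ℝ)
    (γ : (∀ p : {p : Q × C // mea p.1 p.2}, V p.1.1) → ℝ) : Prop :=
  ∀ (q : Q) (c c' : C) (h : mea q c) (h' : mea q c'),
    IsGreatest
      {r : ℝ | ∃ ν : V q × V q → ℝ, IsDist ν ∧
          margin ν Prod.fst = margin (μ c) (fun x => x ⟨q, h⟩) ∧
          margin ν Prod.snd = margin (μ c') (fun x => x ⟨q, h'⟩) ∧
          r = ∑ v : V q, ν (v, v)}
      (∑ x ∈ univ.filter
          (fun x : ∀ p : {p : Q × C // mea p.1 p.2}, V p.1.1 =>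
            x ⟨(q, c), h⟩ = x ⟨(q, c'), h'⟩), γ x)

/-- A system is CbD-noncontextual if it has a multimaximally connected coupling. -/
def CbDNoncontextual {Q C : Type} [Fintype Q] [DecidableEq Q] [Fintype C] [DecidableEq C]
    (mea : Q → C → Bool) (V : Q → Type) [∀ q, Fintype (V q)] [∀ q, DecidableEq (V q)]
    (μ : ∀ c : C, (∀ q : {q : Q // mea q c}, V q.1) → ℝ) : Prop :=
  ∃ γ, IsCoupling mea V μ γ ∧ IsMultimaximal mea V μ γ

/-! A multimaximally connected coupling of the whole system pushes forward, along the projection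
onto the coordinates `(q, c)` with `q` measured in `c0`, to a coupling of the F-CF subsystem.
Each connection of the subsystem is a connection of the original system with the same pair of
marginals, so the maximal diagonal probabilities are unchanged, and pushing forward preserves
the probability that two coordinates agree. -/

section Margin

variable {α β δ : Type} [Fintype α] [Fintype β] [DecidableEq β]

theorem sum_filter_margin (d : α → ℝ) (f : α → β) (P : β → Prop) [DecidablePred P] :
    ∑ b ∈ univ.filter P, margin d f b = ∑ a ∈ univ.filter (fun a => P (f a)), d a := by
  simp only [margin]
  rw [Finset.sum_fiberwise_eq_sum_filter]
  simp only [mem_filter, mem_univ, true_and]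

theorem sum_margin (d : α → ℝ) (f : α → β) : ∑ b, margin d f b = ∑ a, d a := by
  simpa using sum_filter_margin d f (fun _ => True)

theorem margin_margin [DecidableEq δ] (d : α → ℝ) (f : α → β) (g : β → δ) :
    margin (margin d f) g = margin d (g ∘ f) := by
  funext b
  exact sum_filter_margin d f (fun y => g y = b)

theorem IsDist.margin {d : α → ℝ} (hd : IsDist d) (f : α → β) :
    IsDist (margin d f) :=
  ⟨fun _ => Finset.sum_nonneg fun a _ => hd.1 a, (sum_margin d f).trans hd.2⟩

end Margin

section Comap

variable {Q Q' C : Type} [Fintype Q] [DecidableEq Q] [Fintype Q'] [DecidableEq Q']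
  [Fintype C] [DecidableEq C]
  {mea : Q → C → Bool} {V : Q → Type} [∀ q, Fintype (V q)] [∀ q, DecidableEq (V q)]
  {μ : ∀ c : C, (∀ q : {q : Q // mea q c}, V q.1) → ℝ}
  {γ : (∀ p : {p : Q × C // mea p.1 p.2}, V p.1.1) → ℝ}

def comapSystem (μ : ∀ c : C, (∀ q : {q : Q // mea q c}, V q.1) → ℝ) (ι : Q' → Q) :
    ∀ c : C, (∀ q : {q : Q' // mea (ι q) c}, V (ι q.1)) → ℝ :=
  fun c => margin (μ c) (fun x q => x ⟨ι q.1, q.2⟩)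

def comapCoupling (γ : (∀ p : {p : Q × C // mea p.1 p.2}, V p.1.1) → ℝ) (ι : Q' → Q) :
    (∀ p : {p : Q' × C // mea (ι p.1) p.2}, V (ι p.1.1)) → ℝ :=
  margin γ (fun x p => x ⟨(ι p.1.1, p.1.2), p.2⟩)

theorem IsCoupling.comap (hγ : IsCoupling mea V μ γ) (ι : Q' → Q) :
    IsCoupling (fun q c => mea (ι q) c) (fun q => V (ι q)) (comapSystem μ ι)
      (comapCoupling γ ι) := by
  refine ⟨hγ.1.margin _, fun c => ?_⟩
  rw [comapCoupling, margin_margin, comapSystem, ← hγ.2 c, margin_margin]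
  rfl

theorem IsMultimaximal.comap (hγ : IsMultimaximal mea V μ γ) (ι : Q' → Q) :
    IsMultimaximal (fun q c => mea (ι q) c) (fun q => V (ι q)) (comapSystem μ ι)
      (comapCoupling γ ι) := by
  intro q c c' h h'
  simp only [comapSystem, comapCoupling, margin_margin, sum_filter_margin]
  exact hγ (ι q) c c' h h'

theorem CbDNoncontextual.comap (hμ : CbDNoncontextual mea V μ) (ι : Q' → Q) :
    CbDNoncontextual (fun q c => mea (ι q) c) (fun q => V (ι q)) (comapSystem μ ι) :=
  let ⟨γ, hcoup, hmax⟩ := hμ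
  ⟨comapCoupling γ ι, hcoup.comap ι, hmax.comap ι⟩

end Comap

theorem cbd_noncontextual_implies_gCFD_general
    {Q C : Type} [Fintype Q] [DecidableEq Q] [Fintype C] [DecidableEq C]
    (mea : Q → C → Bool) (V : Q → Type) [∀ q, Fintype (V q)] [∀ q, DecidableEq (V q)]
    (μ : ∀ c : C, (∀ q : {q : Q // mea q c}, V q.1) → ℝ)
    (hnc : CbDNoncontextual mea V μ) (c0 : C) :
    CbDNoncontextual
      (fun (q : {q : Q // mea q c0}) (c : C) => mea q.1 c)
      (fun q => V q.1)
      (fun c => margin (μ c)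
        (fun x (q : {q : {q : Q // mea q c0} // mea q.1 c}) => x ⟨q.1.1, q.2⟩)) :=
  hnc.comap Subtype.val

/-- **Claim (A) of Section 3.2.** If a system of random variables (not necessarily
strongly consistently connected) is CbD-noncontextual, then for every factual context `c0`
its factual–counterfactual subsystem — whose contents are the contents measured in `c0`,
and whose distribution in each context `c` is the marginal of `μ c` on the contents
measured both in `c` and in `c0` — is also CbD-noncontextual. That is, every
CbD-noncontextual system satisfies generalized counterfactual definiteness (gCFD). -/
theorem cbd_noncontextual_implies_gCFD
    {Q C : Type} [Fintype Q] [DecidableEq Q] [Fintype C] [DecidableEq C]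
    (mea : Q → C → Bool) (V : Q → Type) [∀ q, Fintype (V q)] [∀ q, DecidableEq (V q)]
    (μ : ∀ c : C, (∀ q : {q : Q // mea q c}, V q.1) → ℝ)
    (hdist : ∀ c, IsDist (μ c))
    (hnc : CbDNoncontextual mea V μ) (c0 : C) :
    CbDNoncontextual
      (fun (q : {q : Q // mea q c0}) (c : C) => mea q.1 c)
      (fun q => V q.1)
      (fun c => margin (μ c)
        (fun x (q : {q : {q : Q // mea q c0} // mea q.1 c}) => x ⟨q.1.1, q.2⟩)) :=
  cbd_noncontextual_implies_gCFD_general mea V μ hnc c0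
end
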